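/- arXiv:2103.11443 — 2 statements merged into one kernel-verified Lean document; each statement's English description precedes it below -/
import Mathlib

section
/- Every bipartite biregular graph with degrees r > s ≥ 2, odd diameter d = 2m+1, and order attaining the Moore bound M(r,s;2m+1) = ⌊N2'/ρ⌋·(ρ+σ) has girth at most 4m. -/
/-!
If the girth exceeded `4m`, the ball of radius `2m` around a vertex `u ∈ V1` would be a tree, so
counting its even levels gives `|V1| ≥ N1' := 1 + r(s-1)·∑_{i<m} ((r-1)(s-1))^i`. Double counting
edges gives `r|V1| = s|V2|`, which together with the prescribed order forces
`|V2| = ⌊N2'/ρ⌋·ρ ≤ N2'`. Hence `r·N1' ≤ r|V1| = s|V2| ≤ s·N2'`, contradicting `s·N2' < r·N1'`.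
-/

open Finset

theorem mul_one_add_mul_lt_mul_one_add_mul {r s : ℕ} (hs : 2 ≤ s) (hrs : s < r) (S : ℕ) :
    s * (1 + s * (r - 1) * S) < r * (1 + r * (s - 1) * S) := by
  obtain ⟨a, rfl⟩ : ∃ a, s = a + 2 := ⟨s - 2, by omega⟩
  obtain ⟨b, rfl⟩ : ∃ b, r = a + 3 + b := ⟨r - (a + 3), by omega⟩
  simp only [show a + 3 + b - 1 = a + 2 + b by omega, show a + 2 - 1 = a + 1 by omega]
  nlinarith [Nat.zero_le (a * a * b * S), Nat.zero_le (a * b * b * S), Nat.zero_le (a * b * S),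
    Nat.zero_le (b * b * S), Nat.zero_le (a * a * S), Nat.zero_le (a * S), Nat.zero_le (b * S)]

theorem eq_mul_div_gcd_of_mul_eq_mul {r s a b q : ℕ} (hs : 0 < s)
    (hrs : r * a = s * b) (hab : a + b = q * (r / r.gcd s + s / r.gcd s)) :
    b = q * (r / r.gcd s) := by
  have hg : 0 < r.gcd s := Nat.gcd_pos_of_pos_right r hs
  have hr : r = r / r.gcd s * r.gcd s := (Nat.div_mul_cancel (Nat.gcd_dvd_left r s)).symm
  have hs' : s = s / r.gcd s * r.gcd s := (Nat.div_mul_cancel (Nat.gcd_dvd_right r s)).symm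
  have hσ : 0 < s / r.gcd s := Nat.div_pos (Nat.gcd_le_right r hs) hg
  generalize r / r.gcd s = ρ at *
  generalize s / r.gcd s = σ at *
  generalize r.gcd s = g at *
  subst hr hs'
  have hρσ : ρ * a = σ * b := Nat.eq_of_mul_eq_mul_right hg (by linarith)
  have ha : a = q * σ := by
    refine Nat.eq_of_mul_eq_mul_right (show 0 < ρ + σ by omega) ?_
    nlinarith
  subst ha
  exact Nat.eq_of_mul_eq_mul_left hσ (by linarith)

namespace SimpleGraph

variable {V : Type*} {G : SimpleGraph V} {u v w : V}

theorem egirth_le_two_mul_dist_of_adj_of_adj {a b : V} (ha : G.Adj a w) (hb : G.Adj b w)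
    (hab : a ≠ b) (hda : G.dist u a + 1 = G.dist u w) (hdb : G.dist u b + 1 = G.dist u w) :
    G.egirth ≤ 2 * G.dist u w := by
  have hw : G.Reachable u w := Reachable.of_dist_ne_zero (by omega)
  obtain ⟨p, hp⟩ := (hw.trans ha.symm.reachable).exists_walk_length_eq_dist
  obtain ⟨q, hq⟩ := (hw.trans hb.symm.reachable).exists_walk_length_eq_dist
  have hpq : p.concat ha ≠ q.concat hb := fun he ↦ hab (Walk.concat_inj he).1
  obtain ⟨_, -, -, c, hc, hlen⟩ :=
    ((p.concat ha).isPath_of_length_eq_dist (by simp [hp, hda])).exists_isCycle_length_le_add_of_ne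
      ((q.concat hb).isPath_of_length_eq_dist (by simp [hq, hdb])) hpq
  refine (egirth_le_length hc).trans ?_
  simp only [Walk.length_concat] at hlen
  exact_mod_cast (by omega : c.length ≤ 2 * G.dist u w)

theorem lt_egirth_of_lt_girth {n : ℕ} (h : n < G.girth) : (n : ℕ∞) < G.egirth :=
  (Nat.cast_lt.mpr h).trans_le (ENat.natCast_toNat_le_self _)

section

variable {A B : Set V}

theorem IsBipartiteWith.mem_of_walk (h : G.IsBipartiteWith A B) (hu : u ∈ A) (p : G.Walk u v) :
    (Even p.length → v ∈ A) ∧ (Odd p.length → v ∈ B) := by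
  induction p generalizing A B with
  | nil => simpa
  | cons hadj p ih =>
    simp only [Walk.length_cons, Nat.even_add_one, Nat.odd_add_one, Nat.not_odd_iff_even,
      Nat.not_even_iff_odd]
    exact (ih h.symm (h.mem_of_mem_adj hu hadj)).symm

theorem IsBipartiteWith.mem_of_reachable (h : G.IsBipartiteWith A B) (hu : u ∈ A)
    (hr : G.Reachable u v) : (Even (G.dist u v) → v ∈ A) ∧ (Odd (G.dist u v) → v ∈ B) := by
  obtain ⟨p, hp⟩ := hr.exists_walk_length_eq_dist
  exact hp ▸ h.mem_of_walk hu p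

theorem IsBipartiteWith.dist_eq_add_one_or_of_adj (h : G.IsBipartiteWith A B) (hu : u ∈ A)
    (hr : G.Reachable u v) (hadj : G.Adj v w) :
    G.dist u w = G.dist u v + 1 ∨ G.dist u v = G.dist u w + 1 := by
  have hne : G.dist u v ≠ G.dist u w := by
    intro heq
    have hv := h.mem_of_reachable hu hr
    have hw := h.mem_of_reachable hu (hr.trans hadj.reachable)
    rw [← heq] at hw
    rcases Nat.even_or_odd (G.dist u v) with he | ho
    · exact Set.disjoint_left.mp h.disjoint (hw.1 he) (h.mem_of_mem_adj (hv.1 he) hadj)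
    · exact Set.disjoint_left.mp h.disjoint (h.mem_of_mem_adj' (hv.2 ho) hadj.symm) (hw.2 ho)
  have := hadj.diff_dist_adj (u := u)
  omega

end

variable [Fintype V]

noncomputable def distSphere (G : SimpleGraph V) (u : V) (d : ℕ) : Finset V := {v | G.dist u v = d}

@[simp]
theorem mem_distSphere {d : ℕ} : v ∈ G.distSphere u d ↔ G.dist u v = d := by
  simp [distSphere]

variable [DecidableRel G.Adj]

theorem distSphere_one : G.distSphere u 1 = G.neighborFinset u := by
  ext; simp

theorem card_bipartiteBelow_distSphere_le_one {d : ℕ} (hg : 2 * (d + 1) < G.egirth)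
    (hw : w ∈ G.distSphere u (d + 1)) : #((G.distSphere u d).bipartiteBelow G.Adj w) ≤ 1 := by
  rw [mem_distSphere] at hw
  refine card_le_one.mpr fun a ha b hb ↦ by_contra fun hab ↦ hg.not_ge ?_
  simp only [bipartiteBelow, mem_filter, mem_distSphere] at ha hb
  exact_mod_cast hw ▸ egirth_le_two_mul_dist_of_adj_of_adj ha.2 hb.2 hab
    (by rw [ha.1, hw]) (by rw [hb.1, hw])

section

variable {A B : Set V}

theorem IsBipartiteWith.degree_sub_one_le_card_bipartiteAbove (h : G.IsBipartiteWith A B)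
    (hu : u ∈ A) {d : ℕ} (hg : 2 * (d + 1) < G.egirth) (hv : v ∈ G.distSphere u (d + 1)) :
    G.degree v - 1 ≤ #((G.distSphere u (d + 2)).bipartiteAbove G.Adj v) := by
  classical
  have hdown : (G.distSphere u d).bipartiteAbove G.Adj v =
      (G.distSphere u d).bipartiteBelow G.Adj v := by
    simp only [bipartiteAbove, bipartiteBelow, adj_comm]
  have hsplit : G.neighborFinset v ⊆ (G.distSphere u d).bipartiteAbove G.Adj v ∪
      (G.distSphere u (d + 2)).bipartiteAbove G.Adj v := by
    intro w hw
    rw [mem_neighborFinset] at hw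
    rw [mem_distSphere] at hv
    have := h.dist_eq_add_one_or_of_adj hu (Reachable.of_dist_ne_zero (by omega)) hw
    simp only [mem_union, bipartiteAbove, mem_filter, mem_distSphere, hw, and_true]
    omega
  have hdown_le : #((G.distSphere u d).bipartiteAbove G.Adj v) ≤ 1 :=
    hdown ▸ card_bipartiteBelow_distSphere_le_one hg hv
  have hdeg := (card_le_card hsplit).trans (card_union_le _ _)
  rw [card_neighborFinset_eq_degree] at hdeg
  omega

theorem IsBipartiteWith.card_distSphere_mul_le (h : G.IsBipartiteWith A B) (hu : u ∈ A)
    {d c : ℕ} (hg : 2 * (d + 2) < G.egirth) (hc : ∀ v ∈ G.distSphere u (d + 1), G.degree v = c) :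
    #(G.distSphere u (d + 1)) * (c - 1) ≤ #(G.distSphere u (d + 2)) := by
  have hg' : 2 * (d + 1) < G.egirth := lt_of_le_of_lt (by norm_cast; omega) hg
  simpa using card_mul_le_card_mul G.Adj
    (fun v hv ↦ hc v hv ▸ h.degree_sub_one_le_card_bipartiteAbove hu hg' hv)
    (fun w hw ↦ card_bipartiteBelow_distSphere_le_one (d := d + 1) (by exact_mod_cast hg) hw)

end

variable {A B : Finset V} {r s : ℕ}

theorem IsBipartiteWith.mul_pow_le_card_distSphere (h : G.IsBipartiteWith A B) (hu : u ∈ A)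
    (hA : ∀ v ∈ A, G.degree v = r) (hB : ∀ v ∈ B, G.degree v = s) {i : ℕ}
    (hg : 4 * (i + 1) < G.egirth) :
    r * (s - 1) * ((r - 1) * (s - 1)) ^ i ≤ #(G.distSphere u (2 * i + 2)) := by
  have hodd (j : ℕ) : ∀ v ∈ G.distSphere u (2 * j + 1), G.degree v = s := fun v hv ↦ by
    rw [mem_distSphere] at hv
    exact hB v ((h.mem_of_reachable hu (Reachable.of_dist_ne_zero (by omega))).2 (by simp [hv]))
  have heven (j : ℕ) : ∀ v ∈ G.distSphere u (2 * j + 2), G.degree v = r := fun v hv ↦ by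
    rw [mem_distSphere] at hv
    exact hA v ((h.mem_of_reachable hu (Reachable.of_dist_ne_zero (by omega))).1
      (by simp [hv, Nat.even_add]))
  induction i with
  | zero =>
    have := h.card_distSphere_mul_le hu (d := 0) (lt_of_le_of_lt (by norm_num) hg) (hodd 0)
    rw [zero_add, distSphere_one, card_neighborFinset_eq_degree, hA u hu] at this
    simpa using this
  | succ i ih =>
    have ih := ih (lt_of_le_of_lt (by norm_cast; omega) hg)
    have h₁ := h.card_distSphere_mul_le hu (d := 2 * i + 1)
      (lt_of_le_of_lt (by norm_cast; omega) hg) (heven i)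
    have h₂ := h.card_distSphere_mul_le hu (d := 2 * i + 2)
      (lt_of_le_of_lt (by norm_cast; omega) hg) (hodd (i + 1))
    calc r * (s - 1) * ((r - 1) * (s - 1)) ^ (i + 1)
        = r * (s - 1) * ((r - 1) * (s - 1)) ^ i * (r - 1) * (s - 1) := by ring
      _ ≤ #(G.distSphere u (2 * i + 2)) * (r - 1) * (s - 1) := by gcongr
      _ ≤ #(G.distSphere u (2 * i + 3)) * (s - 1) := by gcongr
      _ ≤ #(G.distSphere u (2 * (i + 1) + 2)) := h₂

theorem IsBipartiteWith.one_add_mul_sum_le_card (h : G.IsBipartiteWith A B) (hu : u ∈ A)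
    (hA : ∀ v ∈ A, G.degree v = r) (hB : ∀ v ∈ B, G.degree v = s) {m : ℕ}
    (hg : 4 * m < G.egirth) :
    1 + r * (s - 1) * ∑ i ∈ range m, ((r - 1) * (s - 1)) ^ i ≤ #A := by
  classical
  -- Level 0 also contains the vertices not reachable from `u` (their `dist` is `0`), so `u` is
  -- counted separately.
  have hdisj : (range m : Set ℕ).PairwiseDisjoint (fun i ↦ G.distSphere u (2 * i + 2)) := by
    intro i _ j _ hij
    refine Finset.disjoint_left.mpr fun v hi hj ↦ ?_
    rw [mem_distSphere] at hi hj
    omega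
  have hsub : (range m).biUnion (fun i ↦ G.distSphere u (2 * i + 2)) ⊆ A.erase u := by
    intro v hv
    simp only [mem_biUnion, mem_distSphere] at hv
    obtain ⟨i, -, hv⟩ := hv
    have hr : G.Reachable u v := Reachable.of_dist_ne_zero (by omega)
    refine mem_erase.mpr ⟨fun huv ↦ ?_, (h.mem_of_reachable hu hr).1 (by simp [hv, Nat.even_add])⟩
    simp [huv] at hv
  calc 1 + r * (s - 1) * ∑ i ∈ range m, ((r - 1) * (s - 1)) ^ i
      ≤ 1 + ∑ i ∈ range m, #(G.distSphere u (2 * i + 2)) := by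
        rw [mul_sum]
        gcongr with i hi
        exact h.mul_pow_le_card_distSphere hu hA hB
          (lt_of_le_of_lt (by norm_cast; simp at hi; omega) hg)
    _ = 1 + #((range m).biUnion (fun i ↦ G.distSphere u (2 * i + 2))) := by
        rw [card_biUnion hdisj]
    _ ≤ 1 + #(A.erase u) := by gcongr
    _ = #A := by rw [add_comm, card_erase_add_one hu]

theorem IsBipartiteWith.mul_card_eq_mul_card (h : G.IsBipartiteWith A B)
    (hA : ∀ v ∈ A, G.degree v = r) (hB : ∀ v ∈ B, G.degree v = s) : r * #A = s * #B := by
  have := isBipartiteWith_sum_degrees_eq h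
  rwa [sum_congr rfl hA, sum_congr rfl hB, sum_const, sum_const, smul_eq_mul, smul_eq_mul,
    mul_comm, mul_comm #B] at this

end SimpleGraph

theorem stmt_4_general {V : Type*} [Fintype V] (G : SimpleGraph V) (V1 V2 : Finset V)
    (hpart : ∀ v, (v ∈ V1 ∧ v ∉ V2) ∨ (v ∈ V2 ∧ v ∉ V1))
    (hbip : ∀ u v, G.Adj u v → (u ∈ V1 ∧ v ∈ V2) ∨ (u ∈ V2 ∧ v ∈ V1))
    (r s m : ℕ) (hs : 2 ≤ s) (hrs : s < r)
    (hdeg1 : ∀ v ∈ V1, (G.neighborSet v).ncard = r)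
    (hdeg2 : ∀ v ∈ V2, (G.neighborSet v).ncard = s)
    (hconn : G.Connected)
    (horder : V1.card + V2.card =
      ((1 + s * (r - 1) * ∑ i ∈ Finset.range m, ((r - 1) * (s - 1)) ^ i) / (r / Nat.gcd r s)) *
        (r / Nat.gcd r s + s / Nat.gcd r s)) :
    G.girth ≤ 4 * m := by
  classical
  by_contra! hgirth
  have hG : G.IsBipartiteWith V1 V2 :=
    ⟨Set.disjoint_left.mpr fun v h₁ h₂ ↦ by rcases hpart v with h | h <;> simp_all, hbip⟩
  have hdeg (v : V) : (G.neighborSet v).ncard = G.degree v := by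
    rw [Set.ncard_eq_toFinset_card', ← G.card_neighborFinset_eq_degree]; rfl
  replace hdeg1 (v : V) (hv : v ∈ V1) : G.degree v = r := hdeg v ▸ hdeg1 v hv
  replace hdeg2 (v : V) (hv : v ∈ V2) : G.degree v = s := hdeg v ▸ hdeg2 v hv
  obtain ⟨u, hu⟩ : ∃ u, u ∈ V1 := by
    obtain ⟨v⟩ := hconn.nonempty
    rcases hpart v with ⟨hv, -⟩ | ⟨hv, -⟩
    · exact ⟨v, hv⟩
    · obtain ⟨w, hw⟩ := (G.degree_pos_iff_exists_adj v).mp (by rw [hdeg2 v hv]; omega)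
      exact ⟨w, hG.mem_of_mem_adj' hv hw.symm⟩
  set S := ∑ i ∈ range m, ((r - 1) * (s - 1)) ^ i
  have hV1 := hG.one_add_mul_sum_le_card hu hdeg1 hdeg2 (G.lt_egirth_of_lt_girth hgirth)
  have hhand := hG.mul_card_eq_mul_card hdeg1 hdeg2
  have hV2 : #V2 ≤ 1 + s * (r - 1) * S := by
    rw [eq_mul_div_gcd_of_mul_eq_mul (by omega) hhand horder]
    exact Nat.div_mul_le_self _ _
  refine (mul_one_add_mul_lt_mul_one_add_mul hs hrs S).not_ge ?_
  calc r * (1 + r * (s - 1) * S) ≤ r * #V1 := by gcongr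
    _ = s * #V2 := hhand
    _ ≤ s * (1 + s * (r - 1) * S) := by gcongr

/-- Every bipartite biregular graph with degrees `r > s ≥ 2`, odd diameter
`2m+1`, and order attaining the Moore bound `⌊N2'/ρ⌋·(ρ+σ)` has girth at most `4m`. -/
theorem stmt_4 {V : Type*} [Fintype V] (G : SimpleGraph V) (V1 V2 : Finset V)
    (hpart : ∀ v, (v ∈ V1 ∧ v ∉ V2) ∨ (v ∈ V2 ∧ v ∉ V1))
    (hbip : ∀ u v, G.Adj u v → (u ∈ V1 ∧ v ∈ V2) ∨ (u ∈ V2 ∧ v ∈ V1))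
    (r s m : ℕ) (hs : 2 ≤ s) (hrs : s < r) (hm : 1 ≤ m)
    (hdeg1 : ∀ v ∈ V1, (G.neighborSet v).ncard = r)
    (hdeg2 : ∀ v ∈ V2, (G.neighborSet v).ncard = s)
    (hconn : G.Connected) (hdiam : G.diam = 2 * m + 1)
    (horder : V1.card + V2.card =
      ((1 + s * (r - 1) * ∑ i ∈ Finset.range m, ((r - 1) * (s - 1)) ^ i) / (r / Nat.gcd r s)) *
        (r / Nat.gcd r s + s / Nat.gcd r s)) :
    G.girth ≤ 4 * m :=
  stmt_4_general G V1 V2 hpart hbip r s m hs hrs hdeg1 hdeg2 hconn horder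
end

section
/- Let r > s ≥ 2, m ≥ 1, N2' = 1 + s(r-1)·∑_{i=0}^{m-1}((r-1)(s-1))^i, and ρ = r/gcd(r,s). If ρ divides N2', then no bipartite biregular graph of degrees (r,s) and diameter 2m+1 attains the Moore bound M(r,s;2m+1); instead its order is at most (N2'/ρ − 1)·(ρ+σ), where σ = s/gcd(r,s). -/
/-!
Around a vertex `u`, double counting the edges between the spheres at distance `d + 1` and
`d + 2` shows that the size of each sphere is at most the corresponding level of the `(r, s)`-biregular
tree, with equality exactly when every vertex of the sphere has a unique neighbour closer to `u`.
Since `V2` consists of the vertices at even distance `≤ 2m` from any `u ∈ V2`, this gives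
`|V2| ≤ N2'`. If `|V2| = N2'`, every ball of radius `2m` around a vertex of `V2` is a tree;
a vertex `v ∈ V1` inherits this from its neighbours, so counting from `v` gives
`|V1| ≥ 1 + r(s - 1)∑ ((r - 1)(s - 1))^i`, which is incompatible with `r|V1| = s|V2|` when
`r > s`. Hence `|V2| < N2'`. Finally `r|V1| = s|V2|` forces `|V1| = σt` and `|V2| = ρt`,
and `ρt < N2'` with `ρ ∣ N2'` gives `t ≤ N2'/ρ - 1`.
-/

open Finset

theorem Nat.exists_eq_mul_div_gcd_of_mul_eq {r s x y : ℕ} (hr : 0 < r) (h : r * x = s * y) :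
    ∃ t, x = s / r.gcd s * t ∧ y = r / r.gcd s * t := by
  have hg : 0 < r.gcd s := Nat.gcd_pos_of_pos_left s hr
  have hρ : 0 < r / r.gcd s := Nat.div_pos (Nat.gcd_le_left s hr) hg
  have hred : r / r.gcd s * x = s / r.gcd s * y := by
    apply Nat.eq_of_mul_eq_mul_left hg
    rw [← mul_assoc, ← mul_assoc, Nat.mul_div_cancel' (Nat.gcd_dvd_left r s),
      Nat.mul_div_cancel' (Nat.gcd_dvd_right r s), h]
  obtain ⟨t, rfl⟩ : r / r.gcd s ∣ y :=
    (Nat.coprime_div_gcd_div_gcd hg).dvd_of_dvd_mul_left ⟨x, hred.symm⟩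
  refine ⟨t, Nat.eq_of_mul_eq_mul_left hρ ?_, rfl⟩
  rw [hred]
  ring

/-- Size of the `d`-th level of the tree whose root has `a` children, whose vertices at odd depth
have degree `b` and whose vertices at positive even depth have degree `a`. -/
def mooreLevel (a b : ℕ) : ℕ → ℕ
  | 0 => 1
  | 1 => a
  | d + 2 => ((if Even (d + 1) then a else b) - 1) * mooreLevel a b (d + 1)

-- `mooreCount s r m` is the paper's `N2'`, see `mooreCount_eq`.
def mooreCount (a b m : ℕ) : ℕ := ∑ k ∈ range (m + 1), mooreLevel a b (2 * k)

theorem mooreLevel_two_mul_add_one (a b k : ℕ) :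
    mooreLevel a b (2 * k + 1) = a * ((b - 1) * (a - 1)) ^ k := by
  induction k with
  | zero => simp [mooreLevel]
  | succ k ih =>
    have hodd : ¬Even (2 * k + 1) := by simp [parity_simps]
    have heven : Even (2 * k + 2) := ⟨k + 1, by ring⟩
    rw [show 2 * (k + 1) + 1 = 2 * k + 1 + 2 by ring, mooreLevel, if_pos heven,
      show 2 * k + 1 + 1 = 2 * k + 2 by ring, mooreLevel, if_neg hodd, ih]
    ring

theorem mooreLevel_two_mul_add_two (a b k : ℕ) :
    mooreLevel a b (2 * k + 2) = a * (b - 1) * ((b - 1) * (a - 1)) ^ k := by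
  have hodd : ¬Even (2 * k + 1) := by simp [parity_simps]
  rw [mooreLevel, if_neg hodd, mooreLevel_two_mul_add_one]
  ring

theorem mooreCount_eq (a b m : ℕ) :
    mooreCount a b m = 1 + a * (b - 1) * ∑ i ∈ range m, ((b - 1) * (a - 1)) ^ i := by
  rw [mooreCount, sum_range_succ', mul_sum, add_comm]
  simp only [mul_add, mul_one, mooreLevel_two_mul_add_two]
  rfl

theorem mul_mooreCount_lt {a b : ℕ} (hb : 2 ≤ b) (hba : b < a) (m : ℕ) :
    b * mooreCount b a m < a * mooreCount a b m := by
  obtain ⟨c, rfl⟩ : ∃ c, a = b + 1 + c := ⟨a - b - 1, by omega⟩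
  obtain ⟨e, rfl⟩ : ∃ e, b = e + 2 := ⟨b - 2, by omega⟩
  rw [mooreCount_eq, mooreCount_eq, mul_comm (e + 2 + 1 + c - 1)]
  generalize ∑ i ∈ range m, ((e + 2 - 1) * (e + 2 + 1 + c - 1)) ^ i = Q
  simp only [show e + 2 - 1 = e + 1 by omega, show e + 2 + 1 + c - 1 = e + 2 + c by omega]
  -- `a²(b - 1) - b²(a - 1) = (a - b)((a - 1)(b - 1) - 1)`
  have hk : (e + 2) * ((e + 2) * (e + 2 + c)) ≤ (e + 2 + 1 + c) * ((e + 2 + 1 + c) * (e + 1)) :=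
    Nat.le.intro (k := e * e + 3 * e + 1 + c * (e * e + 4 * e + 2) + c * c * (e + 1)) (by ring)
  calc (e + 2) * (1 + (e + 2) * (e + 2 + c) * Q)
      = (e + 2) + (e + 2) * ((e + 2) * (e + 2 + c)) * Q := by ring
    _ < (e + 2 + 1 + c) + (e + 2 + 1 + c) * ((e + 2 + 1 + c) * (e + 1)) * Q :=
      add_lt_add_of_lt_of_le (by omega) (Nat.mul_le_mul_right Q hk)
    _ = (e + 2 + 1 + c) * (1 + (e + 2 + 1 + c) * (e + 1) * Q) := by ring

namespace SimpleGraph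

variable {V : Type*} {G : SimpleGraph V} {A B : Set V} {u v w x : V} {d : ℕ}

theorem IsBipartiteWith.mem_and_even_or_mem_and_odd (h : G.IsBipartiteWith A B) (hu : u ∈ A)
    (p : G.Walk u v) : (v ∈ A ∧ Even p.length) ∨ (v ∈ B ∧ Odd p.length) := by
  induction p generalizing A B with
  | nil => simp [hu]
  | cons hadj p ih =>
    have := ih h.symm (h.mem_of_mem_adj hu hadj)
    rw [← Nat.not_even_iff_odd] at this ⊢
    rw [Walk.length_cons, Nat.even_add_one]
    tauto

theorem IsBipartiteWith.mem_of_even_dist (hG : G.Connected) (h : G.IsBipartiteWith A B)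
    (hu : u ∈ A) (he : Even (G.dist u v)) : v ∈ A := by
  obtain ⟨p, hp⟩ := hG.exists_walk_length_eq_dist u v
  rcases h.mem_and_even_or_mem_and_odd hu p with ⟨hv, -⟩ | ⟨-, ho⟩
  · exact hv
  · exact absurd he (Nat.not_even_iff_odd.mpr (hp ▸ ho))

theorem IsBipartiteWith.mem_of_odd_dist (hG : G.Connected) (h : G.IsBipartiteWith A B)
    (hu : u ∈ A) (ho : Odd (G.dist u v)) : v ∈ B := by
  obtain ⟨p, hp⟩ := hG.exists_walk_length_eq_dist u v
  rcases h.mem_and_even_or_mem_and_odd hu p with ⟨-, he⟩ | ⟨hv, -⟩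
  · exact absurd (hp ▸ he) (Nat.not_even_iff_odd.mpr ho)
  · exact hv

theorem IsBipartiteWith.dist_eq_add_one_or (hG : G.Connected) (h : G.IsBipartiteWith A B)
    (hu : u ∈ A) (hadj : G.Adj v w) :
    G.dist u w = G.dist u v + 1 ∨ G.dist u v = G.dist u w + 1 := by
  have hne : G.dist u v ≠ G.dist u w := by
    intro heq
    rcases Nat.even_or_odd (G.dist u v) with he | ho
    · exact Set.disjoint_left.mp h.disjoint (h.mem_of_even_dist hG hu (heq ▸ he))
        (h.mem_of_mem_adj (h.mem_of_even_dist hG hu he) hadj)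
    · exact Set.disjoint_right.mp h.disjoint (h.mem_of_odd_dist hG hu (heq ▸ ho))
        (h.mem_of_mem_adj' (h.mem_of_odd_dist hG hu ho) hadj.symm)
  rcases hadj.diff_dist_adj (u := u) with h' | h' | h' <;> omega

theorem Connected.dist_le_dist_add_one_of_adj (hG : G.Connected) (hadj : G.Adj v w) (u : V) :
    G.dist u w ≤ G.dist u v + 1 := by
  simpa [dist_eq_one_iff_adj.mpr hadj] using hG.dist_triangle (u := u) (v := v) (w := w)

theorem Connected.exists_adj_dist_eq_of_dist_eq_add_one (hG : G.Connected)
    (hx : G.dist u x = d + 1) : ∃ y, G.Adj x y ∧ G.dist u y = d := by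
  obtain ⟨p, hp⟩ := hG.exists_walk_length_eq_dist x u
  rw [dist_comm, hx] at hp
  cases p with
  | nil => simp at hp
  | @cons _ y _ hadj q =>
    have hlen : q.length = d := by simpa using hp
    have hq : G.dist u y ≤ d := dist_comm.trans_le (hlen ▸ dist_le q)
    exact ⟨y, hadj, by have := hG.dist_le_dist_add_one_of_adj hadj.symm u; omega⟩

section Sphere

variable [Fintype V]

noncomputable def sphere (G : SimpleGraph V) (u : V) (d : ℕ) : Finset V := {x | G.dist u x = d}

@[simp] theorem mem_sphere : x ∈ G.sphere u d ↔ G.dist u x = d := by simp [sphere]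

theorem ncard_neighborSet_eq_degree [DecidableRel G.Adj] (v : V) :
    (G.neighborSet v).ncard = G.degree v := by
  rw [← card_neighborFinset_eq_degree, ← Set.ncard_coe_finset, coe_neighborFinset]

theorem Connected.card_sphere_zero (hG : G.Connected) (u : V) : #(G.sphere u 0) = 1 := by
  rw [card_eq_one]
  exact ⟨u, by ext x; simp [hG.dist_eq_zero_iff, eq_comm]⟩

theorem disjoint_sphere {e : ℕ} (hde : d ≠ e) : Disjoint (G.sphere u d) (G.sphere u e) :=
  Finset.disjoint_left.mpr fun _ hd he => hde ((mem_sphere.mp hd).symm.trans (mem_sphere.mp he))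

theorem IsBipartiteWith.sum_card_sphere_two_mul_le_card {A B : Finset V} (hG : G.Connected)
    (h : G.IsBipartiteWith A B) (hu : u ∈ A) (m : ℕ) :
    ∑ k ∈ range (m + 1), #(G.sphere u (2 * k)) ≤ #A := by
  classical
  rw [← card_biUnion fun i _ j _ hij => disjoint_sphere (by omega : 2 * i ≠ 2 * j)]
  refine card_le_card (biUnion_subset.mpr fun k _ x hx => ?_)
  exact h.mem_of_even_dist hG hu ⟨k, by rw [mem_sphere.mp hx]; ring⟩

theorem IsBipartiteWith.card_eq_sum_card_sphere_two_mul {A B : Finset V} (hG : G.Connected)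
    (h : G.IsBipartiteWith A B) (hu : u ∈ A) {m : ℕ} (hdist : ∀ x, G.dist u x ≤ 2 * m + 1) :
    #A = ∑ k ∈ range (m + 1), #(G.sphere u (2 * k)) := by
  classical
  refine le_antisymm ?_ (h.sum_card_sphere_two_mul_le_card hG hu m)
  rw [← card_biUnion fun i _ j _ hij => disjoint_sphere (by omega : 2 * i ≠ 2 * j)]
  refine card_le_card fun x hx => ?_
  obtain ⟨k, hk⟩ : Even (G.dist u x) := by
    by_contra hodd
    exact Set.disjoint_left.mp h.disjoint hx
      (h.mem_of_odd_dist hG hu (Nat.not_even_iff_odd.mp hodd))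
  have := hdist x
  simp only [mem_biUnion, mem_range, mem_sphere]
  exact ⟨k, by omega, by omega⟩

variable [DecidableRel G.Adj]

theorem card_sphere_one (u : V) : #(G.sphere u 1) = G.degree u := by
  rw [← card_neighborFinset_eq_degree]
  congr 1
  ext x
  simp

theorem Connected.card_neighbors_dist_eq_zero (hG : G.Connected) (hx : G.dist u x = 1) :
    #{y ∈ G.neighborFinset x | G.dist u y = 0} = 1 := by
  rw [card_eq_one]
  refine ⟨u, ?_⟩
  ext y
  simp only [mem_filter, mem_neighborFinset, hG.dist_eq_zero_iff, mem_singleton]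
  constructor
  · exact fun h => h.2.symm
  · rintro rfl
    exact ⟨(dist_eq_one_iff_adj.mp hx).symm, rfl⟩

theorem Connected.card_neighbors_dist_eq_pos (hG : G.Connected) (hx : G.dist u x = d + 1) :
    0 < #{y ∈ G.neighborFinset x | G.dist u y = d} := by
  obtain ⟨y, hxy, hy⟩ := hG.exists_adj_dist_eq_of_dist_eq_add_one hx
  exact card_pos.mpr ⟨y, by simp [hxy, hy]⟩

theorem sum_card_neighbors_sphere_comm (u : V) (d e : ℕ) :
    ∑ x ∈ G.sphere u d, #{y ∈ G.neighborFinset x | G.dist u y = e} =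
      ∑ y ∈ G.sphere u e, #{x ∈ G.neighborFinset y | G.dist u x = d} := by
  have hfilter (x : V) (k : ℕ) :
      {y ∈ G.neighborFinset x | G.dist u y = k} = {y ∈ G.sphere u k | G.Adj x y} := by
    ext; simp [and_comm]
  simp only [hfilter]
  exact (sum_card_bipartiteAbove_eq_sum_card_bipartiteBelow G.Adj).trans
    (by simp [bipartiteBelow, adj_comm])

theorem Connected.card_sphere_le_sum_card_neighbors (hG : G.Connected) (u : V) (d : ℕ) :
    #(G.sphere u (d + 1)) ≤
      ∑ x ∈ G.sphere u (d + 1), #{y ∈ G.neighborFinset x | G.dist u y = d} := by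
  rw [card_eq_sum_ones]
  exact sum_le_sum fun x hx => hG.card_neighbors_dist_eq_pos (mem_sphere.mp hx)

theorem Connected.sum_card_neighbors_eq_card_sphere_iff (hG : G.Connected) (u : V) (d : ℕ) :
    ∑ x ∈ G.sphere u (d + 1), #{y ∈ G.neighborFinset x | G.dist u y = d} =
        #(G.sphere u (d + 1)) ↔
      ∀ x ∈ G.sphere u (d + 1), #{y ∈ G.neighborFinset x | G.dist u y = d} = 1 := by
  rw [card_eq_sum_ones, eq_comm,
    sum_eq_sum_iff_of_le fun x hx => hG.card_neighbors_dist_eq_pos (mem_sphere.mp hx)]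
  exact forall₂_congr fun _ _ => eq_comm

theorem IsBipartiteWith.card_neighbors_add_card_neighbors (hG : G.Connected)
    (h : G.IsBipartiteWith A B) (hu : u ∈ A) (hw : G.dist u w = d + 1) :
    #{y ∈ G.neighborFinset w | G.dist u y = d} +
      #{y ∈ G.neighborFinset w | G.dist u y = d + 2} = G.degree w := by
  classical
  rw [← card_union_of_disjoint (disjoint_filter.mpr fun _ _ _ => by omega), ← filter_or,
    filter_true_of_mem, card_neighborFinset_eq_degree]
  intro y hy
  have := h.dist_eq_add_one_or hG hu ((mem_neighborFinset _ _ _).mp hy)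
  omega

theorem IsBipartiteWith.sum_card_neighbors_add_sum_card_neighbors (hG : G.Connected)
    (h : G.IsBipartiteWith A B) (hu : u ∈ A) {D : ℕ}
    (hD : ∀ w ∈ G.sphere u (d + 1), G.degree w = D) :
    ∑ x ∈ G.sphere u (d + 2), #{y ∈ G.neighborFinset x | G.dist u y = d + 1} +
      ∑ w ∈ G.sphere u (d + 1), #{y ∈ G.neighborFinset w | G.dist u y = d} =
        D * #(G.sphere u (d + 1)) := by
  rw [sum_card_neighbors_sphere_comm, ← sum_add_distrib]
  trans ∑ _w ∈ G.sphere u (d + 1), D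
  · refine sum_congr rfl fun w hw => ?_
    rw [add_comm, h.card_neighbors_add_card_neighbors hG hu (mem_sphere.mp hw), hD w hw]
  · rw [sum_const, smul_eq_mul, mul_comm]

theorem IsBipartiteWith.card_sphere_add_two_le (hG : G.Connected) (h : G.IsBipartiteWith A B)
    (hu : u ∈ A) {D : ℕ} (hD : ∀ w ∈ G.sphere u (d + 1), G.degree w = D) :
    #(G.sphere u (d + 2)) ≤ (D - 1) * #(G.sphere u (d + 1)) := by
  have hsum := h.sum_card_neighbors_add_sum_card_neighbors hG hu hD
  have hX : #(G.sphere u (d + 2)) ≤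
      ∑ x ∈ G.sphere u (d + 2), #{y ∈ G.neighborFinset x | G.dist u y = d + 1} :=
    hG.card_sphere_le_sum_card_neighbors u (d + 1)
  have hY := hG.card_sphere_le_sum_card_neighbors u d
  rw [Nat.sub_one_mul]
  generalize D * #(G.sphere u (d + 1)) = P at *
  omega

theorem IsBipartiteWith.card_neighbors_eq_one_of_card_sphere_eq (hG : G.Connected)
    (h : G.IsBipartiteWith A B) (hu : u ∈ A) {D : ℕ}
    (hD : ∀ w ∈ G.sphere u (d + 1), G.degree w = D)
    (heq : #(G.sphere u (d + 2)) = (D - 1) * #(G.sphere u (d + 1))) :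
    ∀ x ∈ G.sphere u (d + 2), #{y ∈ G.neighborFinset x | G.dist u y = d + 1} = 1 := by
  have hsum := h.sum_card_neighbors_add_sum_card_neighbors hG hu hD
  have hX : #(G.sphere u (d + 2)) ≤
      ∑ x ∈ G.sphere u (d + 2), #{y ∈ G.neighborFinset x | G.dist u y = d + 1} :=
    hG.card_sphere_le_sum_card_neighbors u (d + 1)
  have hY := hG.card_sphere_le_sum_card_neighbors u d
  rw [Nat.sub_one_mul] at heq
  generalize D * #(G.sphere u (d + 1)) = P at *
  have hX' : ∑ x ∈ G.sphere u (d + 2), #{y ∈ G.neighborFinset x | G.dist u y = d + 1} =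
      #(G.sphere u (d + 2)) := by omega
  exact (hG.sum_card_neighbors_eq_card_sphere_iff u (d + 1)).mp hX'

theorem IsBipartiteWith.card_sphere_eq_of_card_neighbors_eq_one (hG : G.Connected)
    (h : G.IsBipartiteWith A B) (hu : u ∈ A) {D : ℕ}
    (hD : ∀ w ∈ G.sphere u (d + 1), G.degree w = D)
    (h₁ : ∀ x ∈ G.sphere u (d + 1), #{y ∈ G.neighborFinset x | G.dist u y = d} = 1)
    (h₂ : ∀ x ∈ G.sphere u (d + 2), #{y ∈ G.neighborFinset x | G.dist u y = d + 1} = 1) :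
    #(G.sphere u (d + 2)) = (D - 1) * #(G.sphere u (d + 1)) := by
  have hsum := h.sum_card_neighbors_add_sum_card_neighbors hG hu hD
  have hX : ∑ x ∈ G.sphere u (d + 2), #{y ∈ G.neighborFinset x | G.dist u y = d + 1} =
      #(G.sphere u (d + 2)) := (hG.sum_card_neighbors_eq_card_sphere_iff u (d + 1)).mpr h₂
  have hY := (hG.sum_card_neighbors_eq_card_sphere_iff u d).mpr h₁
  rw [Nat.sub_one_mul]
  generalize D * #(G.sphere u (d + 1)) = P at *
  omega

-- In a bipartite graph this says that the ball of radius `R` around `u` induces a tree.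
def UniqueParentsWithin (G : SimpleGraph V) [DecidableRel G.Adj] (u : V) (R : ℕ) : Prop :=
  ∀ ⦃d x⦄, d < R → G.dist u x = d + 1 → #{y ∈ G.neighborFinset x | G.dist u y = d} = 1

theorem IsBipartiteWith.uniqueParentsWithin_of_forall_adj (hG : G.Connected)
    (h : G.IsBipartiteWith A B) (hv : v ∈ A) {R : ℕ}
    (hnbr : ∀ u, G.Adj v u → G.UniqueParentsWithin u R) : G.UniqueParentsWithin v R := by
  rintro (_ | e) x hR hx
  · exact hG.card_neighbors_dist_eq_zero hx
  by_contra hne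
  obtain ⟨y, hy, z, hz, hyz⟩ := one_lt_card.mp
    (lt_of_le_of_ne (hG.card_neighbors_dist_eq_pos hx) (Ne.symm hne))
  simp only [mem_filter, mem_neighborFinset] at hy hz
  obtain ⟨u, hvu, huy⟩ := hG.exists_adj_dist_eq_of_dist_eq_add_one (dist_comm.trans hy.2)
  rw [dist_comm] at huy
  have hU := hnbr u hvu
  have huB : u ∈ B := h.mem_of_mem_adj hv hvu
  have hux : G.dist u x = e + 1 := by
    have := hG.dist_le_dist_add_one_of_adj hy.1.symm u
    have := hG.dist_le_dist_add_one_of_adj hvu.symm x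
    rw [dist_comm (u := x), dist_comm (u := x)] at this
    omega
  have hy' : y ∈ {y ∈ G.neighborFinset x | G.dist u y = e} := by simp [hy.1, huy]
  rcases h.symm.dist_eq_add_one_or hG huB hz.1 with huz | huz
  · -- `z` lies one level below `x` as seen from `u`, and has a second parent there
    obtain ⟨w, hzw, hvw⟩ := hG.exists_adj_dist_eq_of_dist_eq_add_one hz.2
    have huw : G.dist u w = e + 1 := by
      have := hG.dist_le_dist_add_one_of_adj hzw.symm u
      have := hG.dist_triangle (u := u) (v := v) (w := w)
      rw [dist_eq_one_iff_adj.mpr hvu.symm] at this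
      omega
    have hx' : x ∈ {y ∈ G.neighborFinset z | G.dist u y = e + 1} := by simp [hz.1.symm, hux]
    have hw' : w ∈ {y ∈ G.neighborFinset z | G.dist u y = e + 1} := by simp [hzw, huw]
    have hwx : w ≠ x := by rintro rfl; omega
    exact hwx (card_le_one.mp (hU (by omega) (by omega)).le _ hw' _ hx')
  · have hz' : z ∈ {y ∈ G.neighborFinset x | G.dist u y = e} := by simp [hz.1]; omega
    exact hyz (card_le_one.mp (hU (by omega) hux).le _ hy' _ hz')

structure IsBiregularWith (G : SimpleGraph V) [DecidableRel G.Adj] (A B : Finset V) (a b : ℕ) :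
    Prop where
  isBipartiteWith : G.IsBipartiteWith A B
  degree_of_mem_left : ∀ v ∈ A, G.degree v = a
  degree_of_mem_right : ∀ v ∈ B, G.degree v = b

namespace IsBiregularWith

variable {A B : Finset V} {a b : ℕ}

theorem symm (hB : G.IsBiregularWith A B a b) : G.IsBiregularWith B A b a :=
  ⟨hB.isBipartiteWith.symm, hB.degree_of_mem_right, hB.degree_of_mem_left⟩

theorem mul_card_eq_mul_card (hB : G.IsBiregularWith A B a b) : a * #A = b * #B := by
  have := isBipartiteWith_sum_degrees_eq hB.isBipartiteWith
  rwa [sum_congr rfl hB.degree_of_mem_left, sum_congr rfl hB.degree_of_mem_right, sum_const,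
    sum_const, smul_eq_mul, smul_eq_mul, mul_comm, mul_comm #B] at this

theorem degree_eq_of_dist_eq (hG : G.Connected) (hB : G.IsBiregularWith A B a b) (hu : u ∈ A)
    (hw : G.dist u w = d) : G.degree w = if Even d then a else b := by
  split_ifs with hd
  · exact hB.degree_of_mem_left w (hB.isBipartiteWith.mem_of_even_dist hG hu (hw ▸ hd))
  · exact hB.degree_of_mem_right w
      (hB.isBipartiteWith.mem_of_odd_dist hG hu (hw ▸ Nat.not_even_iff_odd.mp hd))

theorem card_sphere_add_two_le (hG : G.Connected) (hB : G.IsBiregularWith A B a b) (hu : u ∈ A)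
    (d : ℕ) :
    #(G.sphere u (d + 2)) ≤ ((if Even (d + 1) then a else b) - 1) * #(G.sphere u (d + 1)) :=
  hB.isBipartiteWith.card_sphere_add_two_le hG hu
    fun _ hw => hB.degree_eq_of_dist_eq hG hu (mem_sphere.mp hw)

theorem card_sphere_le_mooreLevel (hG : G.Connected) (hB : G.IsBiregularWith A B a b)
    (hu : u ∈ A) (d : ℕ) : #(G.sphere u d) ≤ mooreLevel a b d := by
  induction d with
  | zero => simp [hG.card_sphere_zero, mooreLevel]
  | succ d ih =>
    cases d with
    | zero => simp [card_sphere_one, mooreLevel, hB.degree_of_mem_left u hu]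
    | succ d => exact (hB.card_sphere_add_two_le hG hu d).trans (Nat.mul_le_mul_left _ ih)

theorem card_sphere_eq_mooreLevel_of_succ (hG : G.Connected) (hB : G.IsBiregularWith A B a b)
    (ha : 2 ≤ a) (hb : 2 ≤ b) (hu : u ∈ A)
    (hd : #(G.sphere u (d + 1)) = mooreLevel a b (d + 1)) :
    #(G.sphere u d) = mooreLevel a b d := by
  cases d with
  | zero => simp [hG.card_sphere_zero, mooreLevel]
  | succ d =>
    have hD : 0 < (if Even (d + 1) then a else b) - 1 := by split_ifs <;> omega
    have hstep := hB.card_sphere_add_two_le hG hu d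
    rw [hd, mooreLevel] at hstep
    exact le_antisymm (hB.card_sphere_le_mooreLevel hG hu (d + 1))
      (Nat.le_of_mul_le_mul_left hstep hD)

theorem card_sphere_eq_mooreLevel_of_le (hG : G.Connected) (hB : G.IsBiregularWith A B a b)
    (ha : 2 ≤ a) (hb : 2 ≤ b) (hu : u ∈ A) {n : ℕ}
    (hn : #(G.sphere u n) = mooreLevel a b n) (hdn : d ≤ n) :
    #(G.sphere u d) = mooreLevel a b d := by
  induction hdn using Nat.decreasingInduction with
  | self => exact hn
  | of_succ d _ ih => exact hB.card_sphere_eq_mooreLevel_of_succ hG ha hb hu ih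

theorem uniqueParentsWithin_of_card_sphere_eq (hG : G.Connected)
    (hB : G.IsBiregularWith A B a b) (ha : 2 ≤ a) (hb : 2 ≤ b) (hu : u ∈ A) {R : ℕ}
    (hR : #(G.sphere u R) = mooreLevel a b R) : G.UniqueParentsWithin u R := by
  rintro (_ | d) x hdR hx
  · exact hG.card_neighbors_dist_eq_zero hx
  refine hB.isBipartiteWith.card_neighbors_eq_one_of_card_sphere_eq hG hu
    (fun _ hw => hB.degree_eq_of_dist_eq hG hu (mem_sphere.mp hw)) ?_ x (mem_sphere.mpr hx)
  rw [hB.card_sphere_eq_mooreLevel_of_le hG ha hb hu hR (d := d + 2) (by omega),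
    hB.card_sphere_eq_mooreLevel_of_le hG ha hb hu hR (d := d + 1) (by omega), mooreLevel]

theorem card_sphere_eq_mooreLevel (hG : G.Connected) (hB : G.IsBiregularWith A B a b)
    (hu : u ∈ A) {R : ℕ} (hR : G.UniqueParentsWithin u R) :
    ∀ d ≤ R, #(G.sphere u d) = mooreLevel a b d := by
  intro d
  induction d with
  | zero => simp [hG.card_sphere_zero, mooreLevel]
  | succ d ih =>
    cases d with
    | zero => simp [card_sphere_one, mooreLevel, hB.degree_of_mem_left u hu]
    | succ d =>
      intro hdR
      rw [hB.isBipartiteWith.card_sphere_eq_of_card_neighbors_eq_one hG hu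
          (fun _ hw => hB.degree_eq_of_dist_eq hG hu (mem_sphere.mp hw))
          (fun _ hx => hR (by omega) (mem_sphere.mp hx))
          (fun _ hx => hR (by omega) (mem_sphere.mp hx)),
        ih (by omega), mooreLevel]

theorem card_le_mooreCount (hG : G.Connected) (hB : G.IsBiregularWith A B a b) (hu : u ∈ A)
    {m : ℕ} (hdist : ∀ x, G.dist u x ≤ 2 * m + 1) : #A ≤ mooreCount a b m := by
  rw [hB.isBipartiteWith.card_eq_sum_card_sphere_two_mul hG hu hdist]
  exact sum_le_sum fun k _ => hB.card_sphere_le_mooreLevel hG hu (2 * k)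

theorem uniqueParentsWithin_of_card_eq_mooreCount (hG : G.Connected)
    (hB : G.IsBiregularWith A B a b) (ha : 2 ≤ a) (hb : 2 ≤ b) (hu : u ∈ A) {m : ℕ}
    (hdist : ∀ x, G.dist u x ≤ 2 * m + 1) (hA : #A = mooreCount a b m) :
    G.UniqueParentsWithin u (2 * m) := by
  rw [hB.isBipartiteWith.card_eq_sum_card_sphere_two_mul hG hu hdist, mooreCount,
    sum_eq_sum_iff_of_le fun k _ => hB.card_sphere_le_mooreLevel hG hu (2 * k)] at hA
  exact hB.uniqueParentsWithin_of_card_sphere_eq hG ha hb hu (hA m (self_mem_range_succ m))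

theorem mooreCount_le_card (hG : G.Connected) (hB : G.IsBiregularWith A B a b) (hu : u ∈ A)
    {m : ℕ} (hU : G.UniqueParentsWithin u (2 * m)) : mooreCount a b m ≤ #A :=
  calc mooreCount a b m = ∑ k ∈ range (m + 1), #(G.sphere u (2 * k)) :=
        sum_congr rfl fun k hk =>
          (hB.card_sphere_eq_mooreLevel hG hu hU _ (by simp at hk; omega)).symm
    _ ≤ #A := hB.isBipartiteWith.sum_card_sphere_two_mul_le_card hG hu m

theorem card_lt_mooreCount (hG : G.Connected) (hB : G.IsBiregularWith A B a b) (hb : 2 ≤ b)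
    (hba : b < a) {m : ℕ} (hdist : ∀ x y, G.dist x y ≤ 2 * m + 1) : #B < mooreCount b a m := by
  have hle : #B ≤ mooreCount b a m := by
    obtain hBe | ⟨u, hu⟩ := B.eq_empty_or_nonempty
    · simp [hBe]
    · exact hB.symm.card_le_mooreCount hG hu (hdist u)
  refine lt_of_le_of_ne hle fun hBcard => ?_
  have hUB (u : V) (hu : u ∈ B) : G.UniqueParentsWithin u (2 * m) :=
    hB.symm.uniqueParentsWithin_of_card_eq_mooreCount hG hb (by omega) hu (hdist u) hBcard
  have hedge := hB.mul_card_eq_mul_card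
  obtain ⟨v, hv⟩ : A.Nonempty := by
    have : 0 < mooreCount b a m := by rw [mooreCount_eq]; omega
    rw [← card_pos]
    by_contra hA
    simp only [not_lt, nonpos_iff_eq_zero] at hA
    rw [hA, mul_zero, hBcard] at hedge
    exact (Nat.mul_pos (by omega) this).ne hedge
  have hUA := hB.isBipartiteWith.uniqueParentsWithin_of_forall_adj hG hv
    fun u hvu => hUB u (hB.isBipartiteWith.mem_of_mem_adj hv hvu)
  have hA := Nat.mul_le_mul_left a (hB.mooreCount_le_card hG hv hUA)
  have := mul_mooreCount_lt hb hba m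
  rw [hBcard] at hedge
  omega

end IsBiregularWith

end Sphere

end SimpleGraph

theorem stmt_7_general {V : Type*} [Fintype V] (G : SimpleGraph V) (V1 V2 : Finset V)
    (hpart : ∀ v, (v ∈ V1 ∧ v ∉ V2) ∨ (v ∈ V2 ∧ v ∉ V1))
    (hbip : ∀ u v, G.Adj u v → (u ∈ V1 ∧ v ∈ V2) ∨ (u ∈ V2 ∧ v ∈ V1))
    (r s m : ℕ) (hs : 2 ≤ s) (hrs : s < r)
    (hdeg1 : ∀ v ∈ V1, (G.neighborSet v).ncard = r)
    (hdeg2 : ∀ v ∈ V2, (G.neighborSet v).ncard = s)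
    (hconn : G.Connected) (hdiam : G.diam = 2 * m + 1)
    (hdvd : (r / Nat.gcd r s) ∣
      (1 + s * (r - 1) * ∑ i ∈ Finset.range m, ((r - 1) * (s - 1)) ^ i)) :
    let ρ := r / Nat.gcd r s
    let σ := s / Nat.gcd r s
    let N2' := 1 + s * (r - 1) * ∑ i ∈ Finset.range m, ((r - 1) * (s - 1)) ^ i
    V1.card + V2.card ≠ (N2' / ρ) * (ρ + σ) ∧
      V1.card + V2.card ≤ (N2' / ρ - 1) * (ρ + σ) := by
  classical
  intro ρ σ N2'
  have hB : G.IsBiregularWith V1 V2 r s :=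
    { isBipartiteWith :=
        { disjoint := Set.disjoint_left.mpr fun v h1 h2 => by have := hpart v; simp_all
          mem_of_adj := fun u v huv => by simpa using hbip u v huv }
      degree_of_mem_left := fun v hv => by rw [← G.ncard_neighborSet_eq_degree, hdeg1 v hv]
      degree_of_mem_right := fun v hv => by rw [← G.ncard_neighborSet_eq_degree, hdeg2 v hv] }
  have hdist (x y : V) : G.dist x y ≤ 2 * m + 1 :=
    hdiam ▸ SimpleGraph.dist_le_diam (SimpleGraph.ediam_ne_top_of_diam_ne_zero (by omega))
  have hlt : #V2 < N2' := by
    simpa only [mooreCount_eq] using hB.card_lt_mooreCount hconn hs hrs hdist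
  obtain ⟨t, hV1, hV2⟩ :=
    Nat.exists_eq_mul_div_gcd_of_mul_eq (by omega) hB.mul_card_eq_mul_card
  have hρ : 0 < r / r.gcd s :=
    Nat.div_pos (Nat.gcd_le_left s (by omega)) (Nat.gcd_pos_of_pos_left s (by omega))
  have ht : t < N2' / ρ := by
    have := Nat.div_lt_div_of_lt_of_dvd hdvd (hV2 ▸ hlt)
    rwa [Nat.mul_div_cancel_left t hρ] at this
  have hρσ : 0 < ρ + σ := Nat.add_pos_left hρ _
  rw [hV1, hV2, show σ * t + ρ * t = t * (ρ + σ) by ring]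
  exact ⟨(Nat.mul_lt_mul_of_pos_right ht hρσ).ne, Nat.mul_le_mul_right _ (by omega)⟩

/-- Let `r > s ≥ 2`, `m ≥ 1`, `N2' = 1 + s(r-1)·∑_{i<m}((r-1)(s-1))^i`,
`ρ = r/gcd(r,s)`, `σ = s/gcd(r,s)`.  If `ρ ∣ N2'`, then no bipartite biregular graph of
degrees `(r,s)` and diameter `2m+1` attains the Moore bound `⌊N2'/ρ⌋·(ρ+σ)`; instead its
order is at most `(N2'/ρ − 1)·(ρ+σ)`. -/
theorem stmt_7 {V : Type*} [Fintype V] (G : SimpleGraph V) (V1 V2 : Finset V)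
    (hpart : ∀ v, (v ∈ V1 ∧ v ∉ V2) ∨ (v ∈ V2 ∧ v ∉ V1))
    (hbip : ∀ u v, G.Adj u v → (u ∈ V1 ∧ v ∈ V2) ∨ (u ∈ V2 ∧ v ∈ V1))
    (r s m : ℕ) (hs : 2 ≤ s) (hrs : s < r) (hm : 1 ≤ m)
    (hdeg1 : ∀ v ∈ V1, (G.neighborSet v).ncard = r)
    (hdeg2 : ∀ v ∈ V2, (G.neighborSet v).ncard = s)
    (hconn : G.Connected) (hdiam : G.diam = 2 * m + 1)
    (hdvd : (r / Nat.gcd r s) ∣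
      (1 + s * (r - 1) * ∑ i ∈ Finset.range m, ((r - 1) * (s - 1)) ^ i)) :
    let ρ := r / Nat.gcd r s
    let σ := s / Nat.gcd r s
    let N2' := 1 + s * (r - 1) * ∑ i ∈ Finset.range m, ((r - 1) * (s - 1)) ^ i
    V1.card + V2.card ≠ (N2' / ρ) * (ρ + σ) ∧
      V1.card + V2.card ≤ (N2' / ρ - 1) * (ρ + σ) :=
  stmt_7_general G V1 V2 hpart hbip r s m hs hrs hdeg1 hdeg2 hconn hdiam hdvd
end
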